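/- Let n ≥ 2, let ξ ∈ ℝⁿ be nonzero, let K be a symmetric n×n real matrix, let Y ∈ ℝⁿ and N ∈ ℝ. If for all indices i, j one has ξᵢYⱼ + ξⱼYᵢ − 2⟨ξ,Y⟩δᵢⱼ = 0, and also Kᵢⱼ⟨ξ,Y⟩ − (KY)ᵢξⱼ − (KY)ⱼξᵢ + ⟨Kξ,Y⟩δᵢⱼ + (ξᵢξⱼ − ‖ξ‖²δᵢⱼ)N = 0, then Y = 0 and N = 0. (Injectivity of the Agmon–Douglis–Nirenberg principal symbol of the formal adjoint of the linearized constraint operator for ξ ≠ 0.) -/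
import Mathlib


/-- Injectivity of the Agmon–Douglis–Nirenberg principal symbol of the formal
adjoint of the linearized constraint operator, for `ξ ≠ 0` (Euclidean form). -/
theorem symbol_adjoint_injective (n : ℕ) (hn : 2 ≤ n)
    (ξ Y : Fin n → ℝ) (hξ : ξ ≠ 0)
    (K : Matrix (Fin n) (Fin n) ℝ) (hK : K.IsSymm) (N : ℝ)
    (h1 : ∀ i j : Fin n,
      ξ i * Y j + ξ j * Y i - 2 * (∑ k, ξ k * Y k) * (if i = j then (1:ℝ) else 0) = 0)
    (h2 : ∀ i j : Fin n,
      K i j * (∑ k, ξ k * Y k) - (∑ k, K i k * Y k) * ξ j - (∑ k, K j k * Y k) * ξ i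
        + (∑ k, ∑ l, K k l * ξ l * Y k) * (if i = j then (1:ℝ) else 0)
        + (ξ i * ξ j - (∑ k, (ξ k)^2) * (if i = j then (1:ℝ) else 0)) * N = 0) :
    Y = 0 ∧ N = 0 := by
  set S := ∑ k, ξ k * Y k with hS
  have hdiag : ∀ i, ξ i * Y i = S := by
    intro i
    have h := h1 i i
    simp only [if_pos rfl, if_true, mul_one] at h
    linarith
  have hSn : (n : ℝ) * S = S := by
    calc (n:ℝ) * S = ∑ _i : Fin n, S := by simp [mul_comm]
    _ = ∑ i, ξ i * Y i := by simp [hdiag]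
    _ = S := hS.symm
  have hS0 : S = 0 := by
    have hne : (n:ℝ) - 1 ≠ 0 := by
      have : (2:ℝ) ≤ n := by exact_mod_cast hn
      linarith
    have : ((n:ℝ) - 1) * S = 0 := by linarith [hSn]
    exact (mul_eq_zero.mp this).resolve_left hne
  obtain ⟨i0, hi0⟩ := Function.ne_iff.mp hξ
  have hi0' : ξ i0 ≠ 0 := hi0
  have hYi0 : Y i0 = 0 := by
    have h := hdiag i0
    rw [hS0] at h
    exact (mul_eq_zero.mp h).resolve_left hi0'
  have hY : Y = 0 := by
    funext j
    have h := h1 i0 j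
    rw [hS0, hYi0] at h
    have h' : ξ i0 * Y j = 0 := by
      rcases eq_or_ne i0 j with rfl | hne
      · simpa using h
      · simp [hne] at h
        rcases h with h | h
        · exact absurd h hi0'
        · simp [h]
    exact (mul_eq_zero.mp h').resolve_left hi0'
  refine ⟨hY, ?_⟩
  subst hY
  have h2' : ∀ i j : Fin n,
      (ξ i * ξ j - (∑ k, (ξ k)^2) * (if i = j then (1:ℝ) else 0)) * N = 0 := by
    intro i j
    have h := h2 i j
    simpa [hS0] using h
  obtain ⟨j0, hj0⟩ := Fintype.exists_ne_of_one_lt_card (by simp; omega) i0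
  have hcross := h2' i0 j0
  rw [if_neg (fun hh => hj0 hh.symm)] at hcross
  have hξj0N : ξ j0 * N = 0 := by
    have : ξ i0 * (ξ j0 * N) = 0 := by linear_combination hcross
    exact (mul_eq_zero.mp this).resolve_left hi0'
  have hdiag2 := h2' j0 j0
  rw [if_pos rfl, mul_one] at hdiag2
  have hsumN : (∑ k, (ξ k)^2) * N = 0 := by linear_combination ξ j0 * hξj0N - hdiag2
  have hsumpos : 0 < ∑ k, (ξ k)^2 := by
    apply Finset.sum_pos' (fun k _ => sq_nonneg _)
    exact ⟨i0, Finset.mem_univ _, by positivity⟩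
  exact (mul_eq_zero.mp hsumN).resolve_left (ne_of_gt hsumpos)
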